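/- arXiv:0907.3264 — 5 statements merged into one kernel-verified Lean document; each statement's English description precedes it below -/
import Mathlib

section
/- Let Φ be a root system in a Euclidean space with basis Δ and W-invariant inner product (·|·), and let λ be a dominant weight (i.e. (λ|α) ≥ 0 for all α ∈ Δ). Suppose β₁, β₂, …, β_m ∈ Δ are distinct simple roots such that (λ|β₁) ≠ 0 and for every i ≤ m there exists j < i with (β_i|β_j) ≠ 0. Then for every l ≤ m, the weight r_{β_l} r_{β_{l-1}} ⋯ r_{β_1}(λ) equals λ − Σᵢ c_i β_i with c_i > 0 for all i ≤ l and c_i = 0 for i > l; in particular its support (the set of simple roots appearing with nonzero coefficient in λ minus the weight) is exactly {β₁, …, β_l}. -/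
open scoped RealInnerProductSpace

/-- The reflection `r_β(v) = v - 2(v|β)/(β|β) β` associated with a root `β`. -/
noncomputable def reflectRoot {V : Type*} [NormedAddCommGroup V] [InnerProductSpace ℝ V]
    (β v : V) : V :=
  v - (2 * ⟪v, β⟫ / ⟪β, β⟫) • β

/-!
Induction on `l`. If `w_l = λ - ∑_{i<l} c_i β_i` with all `c_i > 0`, then
`(w_l | β_l) = (λ | β_l) - ∑_{i<l} c_i (β_i | β_l)` is a sum of nonnegative terms, because `λ` is
dominant and distinct simple roots make obtuse angles. One term is strictly positive: `(λ | β_0)`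
when `l = 0`, and otherwise `-c_j (β_j | β_l)` for the earlier `β_j` not orthogonal to `β_l`.
Hence `r_{β_l}` subtracts a strictly positive multiple of the new root `β_l`.
-/

section

variable {V : Type*} [NormedAddCommGroup V] [InnerProductSpace ℝ V]

theorem exists_pos_reflectRoot_eq_sub_smul {b v : V} (h : 0 < ⟪v, b⟫) :
    ∃ t : ℝ, 0 < t ∧ reflectRoot b v = v - t • b := by
  have hb : b ≠ 0 := by
    rintro rfl
    simp at h
  exact ⟨_, div_pos (by linarith) (real_inner_self_pos.mpr hb), rfl⟩

theorem inner_sub_sum_smul_pos {ι : Type*} [Fintype ι] {lam b : V} {c : ι → ℝ} {β : ι → V}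
    (hlam : 0 ≤ ⟪lam, b⟫) (hterm : ∀ i, c i * ⟪β i, b⟫ ≤ 0)
    (hstrict : 0 < ⟪lam, b⟫ ∨ ∃ i, c i * ⟪β i, b⟫ < 0) :
    0 < ⟪lam - ∑ i, c i • β i, b⟫ := by
  have hsum : ⟪lam - ∑ i, c i • β i, b⟫ = ⟪lam, b⟫ - ∑ i, c i * ⟪β i, b⟫ := by
    simp only [inner_sub_left, sum_inner, real_inner_smul_left]
  rw [hsum]
  rcases hstrict with hlam' | ⟨j, hj⟩
  · linarith [Finset.sum_nonpos fun i (_ : i ∈ Finset.univ) => hterm i]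
  · linarith [Finset.sum_neg' (fun i (_ : i ∈ Finset.univ) => hterm i) ⟨j, Finset.mem_univ j, hj⟩]

theorem sum_add_single_smul {ι : Type*} [Fintype ι] [DecidableEq ι] (c : ι → ℝ) (β : ι → V)
    (k : ι) (t : ℝ) :
    ∑ i, (c + Pi.single k t : ι → ℝ) i • β i = ∑ i, c i • β i + t • β k := by
  simp [add_smul, Finset.sum_add_distrib, Pi.single_apply]

end

theorem inner_sub_sum_smul_chain_pos {V : Type*} [NormedAddCommGroup V] [InnerProductSpace ℝ V]
    {Δ : Finset V} {lam : V} {m : ℕ} {β : Fin m → V}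
    (hβΔ : ∀ i, β i ∈ Δ) (hβinj : Function.Injective β)
    (hobtuse : ∀ α ∈ Δ, ∀ γ ∈ Δ, α ≠ γ → ⟪α, γ⟫ ≤ 0)
    (hdom : ∀ α ∈ Δ, 0 ≤ ⟪lam, α⟫)
    (h1 : ∀ h : 0 < m, ⟪lam, β ⟨0, h⟩⟫ ≠ 0)
    (hchain : ∀ i : Fin m, 0 < (i : ℕ) → ∃ j : Fin m, (j : ℕ) < (i : ℕ) ∧ ⟪β i, β j⟫ ≠ 0)
    {k : Fin m} {c : Fin m → ℝ} (hpos : ∀ i : Fin m, i < k → 0 < c i)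
    (hzero : ∀ i : Fin m, k ≤ i → c i = 0) :
    0 < ⟪lam - ∑ i, c i • β i, β k⟫ := by
  have hearlier : ∀ i, i < k → ⟪β i, β k⟫ ≤ 0 := fun i hi =>
    hobtuse _ (hβΔ i) _ (hβΔ k) (hβinj.ne hi.ne)
  have hterm : ∀ i, c i * ⟪β i, β k⟫ ≤ 0 := by
    intro i
    rcases lt_or_ge i k with hi | hi
    · exact mul_nonpos_of_nonneg_of_nonpos (hpos i hi).le (hearlier i hi)
    · simp [hzero i hi]
  refine inner_sub_sum_smul_pos (hdom _ (hβΔ k)) hterm ?_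
  rcases Nat.eq_zero_or_pos k with hk | hk
  · left
    have hk0 : k = ⟨0, k.pos⟩ := Fin.ext hk
    rw [hk0]
    exact (hdom _ (hβΔ _)).lt_of_ne' (h1 k.pos)
  · right
    obtain ⟨j, hjk, hj⟩ := hchain k hk
    rw [real_inner_comm] at hj
    exact ⟨j, mul_neg_of_pos_of_neg (hpos j hjk) ((hearlier j hjk).lt_of_ne hj)⟩

theorem satake_lemma_admissibility_chain_general
    {V : Type*} [NormedAddCommGroup V] [InnerProductSpace ℝ V]
    (Δ : Finset V) (lam : V) (m : ℕ) (β : Fin m → V)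
    (hβΔ : ∀ i, β i ∈ Δ) (hβinj : Function.Injective β)
    (hobtuse : ∀ α ∈ Δ, ∀ γ ∈ Δ, α ≠ γ → ⟪α, γ⟫ ≤ 0)
    (hdom : ∀ α ∈ Δ, 0 ≤ ⟪lam, α⟫)
    (h1 : ∀ h : 0 < m, ⟪lam, β ⟨0, h⟩⟫ ≠ 0)
    (hchain : ∀ i : Fin m, 0 < (i : ℕ) →
      ∃ j : Fin m, (j : ℕ) < (i : ℕ) ∧ ⟪β i, β j⟫ ≠ 0)
    (w : ℕ → V) (hw0 : w 0 = lam)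
    (hwsucc : ∀ (l : ℕ) (hl : l < m), w (l + 1) = reflectRoot (β ⟨l, hl⟩) (w l)) :
    ∀ l : ℕ, l ≤ m → ∃ c : Fin m → ℝ,
      w l = lam - ∑ i, c i • β i ∧
      (∀ i : Fin m, (i : ℕ) < l → 0 < c i) ∧
      (∀ i : Fin m, l ≤ (i : ℕ) → c i = 0) := by
  intro l
  induction l with
  | zero => exact fun _ => ⟨0, by simp [hw0], fun i hi => absurd hi i.val.not_lt_zero,
      fun _ _ => rfl⟩
  | succ l ih =>
    intro hl
    set k : Fin m := ⟨l, hl⟩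
    obtain ⟨c, hwl, hpos, hzero⟩ := ih (Nat.le_of_succ_le hl)
    have hinner : 0 < ⟪w l, β k⟫ :=
      hwl ▸ inner_sub_sum_smul_chain_pos hβΔ hβinj hobtuse hdom h1 hchain (k := k) hpos hzero
    obtain ⟨t, ht, hrefl⟩ := exists_pos_reflectRoot_eq_sub_smul hinner
    refine ⟨c + Pi.single k t, ?_, fun i hi => ?_, fun i hi => ?_⟩
    · rw [hwsucc l hl, hrefl, hwl, sum_add_single_smul, sub_sub]
    · rcases Nat.lt_succ_iff_lt_or_eq.mp hi with hil | hil
      · have hik : i ≠ k := fun h => by simp [h, k] at hil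
        simpa [hik] using hpos i hil
      · obtain rfl : i = k := Fin.ext hil
        simpa [hzero k le_rfl] using ht
    · have hik : i ≠ k := fun h => by simp [h, k] at hi
      simp [hzero i (by omega), hik]

/-- if `λ` is dominant, `β₁,…,β_m` are distinct simple roots with `(λ|β₁) ≠ 0`
and each `β_i` non-orthogonal to some earlier `β_j`, then for every `l ≤ m`,
`r_{β_l}⋯r_{β_1}(λ) = λ - ∑ c_i β_i` with `c_i > 0` for `i ≤ l` and `c_i = 0` for `i > l`;
in particular its support is exactly `{β₁,…,β_l}`. -/
theorem satake_lemma_admissibility_chain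
    {V : Type*} [NormedAddCommGroup V] [InnerProductSpace ℝ V]
    (Δ : Finset V) (lam : V) (m : ℕ) (β : Fin m → V)
    (hβΔ : ∀ i, β i ∈ Δ) (hβinj : Function.Injective β)
    (hroots_ne : ∀ α ∈ Δ, α ≠ 0)
    (hobtuse : ∀ α ∈ Δ, ∀ γ ∈ Δ, α ≠ γ → ⟪α, γ⟫ ≤ 0)
    (hdom : ∀ α ∈ Δ, 0 ≤ ⟪lam, α⟫)
    (h1 : ∀ h : 0 < m, ⟪lam, β ⟨0, h⟩⟫ ≠ 0)
    (hchain : ∀ i : Fin m, 0 < (i : ℕ) →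
      ∃ j : Fin m, (j : ℕ) < (i : ℕ) ∧ ⟪β i, β j⟫ ≠ 0)
    (w : ℕ → V) (hw0 : w 0 = lam)
    (hwsucc : ∀ (l : ℕ) (hl : l < m), w (l + 1) = reflectRoot (β ⟨l, hl⟩) (w l)) :
    ∀ l : ℕ, l ≤ m → ∃ c : Fin m → ℝ,
      w l = lam - ∑ i, c i • β i ∧
      (∀ i : Fin m, (i : ℕ) < l → 0 < c i) ∧
      (∀ i : Fin m, l ≤ (i : ℕ) → c i = 0) :=
  satake_lemma_admissibility_chain_general Δ lam m β hβΔ hβinj hobtuse hdom h1 hchain w hw0 hwsucc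
end

section
/- Let k be a field complete with respect to a nontrivial discrete non-Archimedean absolute value and let V be a finite-dimensional k-vector space. Then every non-zero (non-Archimedean) seminorm x on V is diagonalizable: there exists a basis (e₀, …, e_d) of V such that |Σᵢ aᵢ eᵢ|(x) = maxᵢ |aᵢ|·|eᵢ|(x) for all scalars aᵢ ∈ k. -/
/-!
Induct on the dimension. For a linear form `f` with `f v = 1`, the seminorm is diagonal on
`ker f` by induction, so its nonzero values there lie in finitely many cosets `q ^ ℤ * x eᵢ` and
are discrete away from `0`. If `x` vanishes at some `v ≠ 0`, use that `v`; otherwise `x` is a norm,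
`ker f` is closed since `k` is complete, so `x (v - h)` is bounded below on `ker f` by a positive
constant and discreteness yields a closest point `h₀`. Then `u = v - h₀` satisfies
`x (a • u + h) = max (‖a‖ * x u) (x h)` for `h ∈ ker f`, and `u` together with the basis of `ker f`
diagonalizes `x`.
-/

open Module Finset
open scoped NNReal

theorem finite_setOf_zpow_mul_mem_Icc {q r a b : ℝ} (hq : 1 < q) (ha : 0 < a) :
    {m : ℤ | q ^ m * r ∈ Set.Icc a b}.Finite := by
  refine (Set.finite_Icc ⌈Real.logb q (a / r)⌉ ⌊Real.logb q (b / r)⌋).subset ?_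
  rintro m ⟨ham, hmb⟩
  have hqm : 0 < q ^ m := zpow_pos (by linarith) m
  have hr : 0 < r := pos_of_mul_pos_right (ha.trans_le ham) hqm.le
  have hlo : a / r ≤ q ^ m := (div_le_iff₀ hr).mpr ham
  have hhi : q ^ m ≤ b / r := (le_div_iff₀ hr).mpr hmb
  have hbr : 0 < b / r := hqm.trans_le hhi
  rw [← Real.rpow_intCast] at hlo hhi
  exact ⟨Int.ceil_le.mpr ((Real.logb_le_iff_le_rpow hq (by positivity)).mpr hlo),
    Int.le_floor.mpr ((Real.le_logb_iff_rpow_le hq hbr).mpr hhi)⟩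

section Diagonal

variable {k V : Type*} [NormedField k] [AddCommGroup V] [Module k V]

structure IsUltrametricSeminorm (k : Type*) {V : Type*} [NormedField k] [AddCommGroup V]
    [Module k V] (x : V → ℝ≥0) : Prop where
  map_smul : ∀ (a : k) (v : V), x (a • v) = ‖a‖₊ * x v
  map_add_le_max : ∀ v w : V, x (v + w) ≤ max (x v) (x w)

def IsDiagonalBasis {ι : Type*} [Fintype ι] (x : V → ℝ≥0) (b : Basis ι k V) : Prop :=
  ∀ c : ι → k, x (∑ i, c i • b i) = univ.sup fun i => ‖c i‖₊ * x (b i)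

namespace IsDiagonalBasis

variable {ι : Type*} [Fintype ι] {x : V → ℝ≥0} {b : Basis ι k V}

theorem exists_eq_nnnorm_repr_mul (hb : IsDiagonalBasis x b) {v : V} (hv : x v ≠ 0) :
    ∃ i, x v = ‖b.repr v i‖₊ * x (b i) := by
  have hsup := hb (b.repr v)
  rw [b.sum_repr] at hsup
  have hne : (univ : Finset ι).Nonempty := by
    by_contra hempty
    rw [not_nonempty_iff_eq_empty.mp hempty, sup_empty] at hsup
    exact hv hsup
  obtain ⟨i, -, hi⟩ := exists_mem_eq_sup univ hne fun i => ‖b.repr v i‖₊ * x (b i)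
  exact ⟨i, hsup.trans hi⟩

theorem finite_range_inter_Icc (hb : IsDiagonalBasis x b) {q : ℝ} (hq : 1 < q)
    (hval : ∀ a : k, a ≠ 0 → ∃ m : ℤ, ‖a‖ = q ^ m) {lo : ℝ≥0} (hlo : 0 < lo) (hi : ℝ≥0) :
    (Set.range x ∩ Set.Icc lo hi).Finite := by
  refine ((Set.finite_iUnion fun i => (finite_setOf_zpow_mul_mem_Icc (r := x (b i)) (b := hi) hq
    (NNReal.coe_pos.mpr hlo)).image fun m : ℤ => q ^ m * (x (b i) : ℝ)).preimage
    NNReal.coe_injective.injOn).subset ?_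
  rintro _ ⟨⟨v, rfl⟩, hvlo, hvhi⟩
  obtain ⟨i, hi⟩ := hb.exists_eq_nnnorm_repr_mul (hlo.trans_le hvlo).ne'
  have hc : b.repr v i ≠ 0 := fun h => by simp [h] at hi; exact (hlo.trans_le hvlo).ne' hi
  obtain ⟨m, hm⟩ := hval _ hc
  have hv : (x v : ℝ) = q ^ m * x (b i) := by rw [hi, NNReal.coe_mul, coe_nnnorm, hm]
  refine Set.mem_iUnion.mpr ⟨i, m, ?_, hv.symm⟩
  rw [Set.mem_ofPred, ← hv]
  exact ⟨NNReal.coe_le_coe.mpr hvlo, NNReal.coe_le_coe.mpr hvhi⟩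

end IsDiagonalBasis

namespace IsUltrametricSeminorm

variable {x : V → ℝ≥0} (hx : IsUltrametricSeminorm k x)
include hx

theorem map_zero : x 0 = 0 := by
  simpa using hx.map_smul 0 0

theorem map_neg (v : V) : x (-v) = x v := by
  simpa using hx.map_smul (-1) v

theorem map_sub_le_max (v w : V) : x (v - w) ≤ max (x v) (x w) := by
  simpa [sub_eq_add_neg, hx.map_neg] using hx.map_add_le_max v (-w)

theorem map_sub_eq_left {v w : V} (h : x w < x v) : x (v - w) = x v := by
  refine le_antisymm ((hx.map_sub_le_max v w).trans_eq (max_eq_left h.le)) ?_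
  have hv := hx.map_add_le_max (v - w) w
  rw [sub_add_cancel] at hv
  exact (le_max_iff.mp hv).resolve_right h.not_ge

theorem comp_subtype (H : Submodule k V) : IsUltrametricSeminorm k fun h : H => x h :=
  ⟨fun a h => hx.map_smul a h, fun v w => hx.map_add_le_max v w⟩

theorem map_smul_add_eq_max {H : Submodule k V} {u : V} (hu : ∀ h ∈ H, x u ≤ x (u + h))
    (a : k) {h : V} (hh : h ∈ H) : x (a • u + h) = max (‖a‖₊ * x u) (x h) := by
  rcases eq_or_ne a 0 with rfl | ha
  · simp
  have hle : ‖a‖₊ * x u ≤ x (a • u + h) :=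
    calc ‖a‖₊ * x u ≤ ‖a‖₊ * x (u + a⁻¹ • h) := by gcongr; exact hu _ (H.smul_mem _ hh)
      _ = x (a • u + h) := by rw [← hx.map_smul, smul_add, smul_inv_smul₀ ha]
  refine le_antisymm ((hx.map_add_le_max _ _).trans_eq (by rw [hx.map_smul])) (max_le hle ?_)
  calc x h = x ((a • u + h) - a • u) := by rw [add_sub_cancel_left]
    _ ≤ max (x (a • u + h)) (x (a • u)) := hx.map_sub_le_max _ _
    _ = x (a • u + h) := max_eq_left (hx.map_smul a u ▸ hle)

theorem isDiagonalBasis_mkFinCons {n : ℕ} {H : Submodule k V} {u : V}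
    (hu : ∀ h ∈ H, x u ≤ x (u + h)) {bH : Basis (Fin n) k H}
    (hbH : IsDiagonalBasis (fun h : H => x h) bH)
    (hli : ∀ (c : k), ∀ h ∈ H, c • u + h = 0 → c = 0) (hsp : ∀ z : V, ∃ c : k, z + c • u ∈ H) :
    IsDiagonalBasis x (Basis.mkFinCons u bH hli hsp) := by
  intro c
  have hsum : ∑ i : Fin n, c i.succ • (bH i : V) = ↑(∑ i, c i.succ • bH i) := by simp
  rw [Basis.coe_mkFinCons, Fin.sum_univ_succ, Fin.univ_succ, sup_cons, sup_map]
  simp only [Fin.cons_zero, Fin.cons_succ, Function.comp_apply, hsum]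
  rw [hx.map_smul_add_eq_max hu _ (Submodule.coe_mem _)]
  exact congrArg _ (hbH _)

theorem exists_forall_map_sub_le {H : Submodule k V}
    (hdisc : ∀ lo : ℝ≥0, 0 < lo → ∀ hi, (Set.range (fun h : H => x h) ∩ Set.Icc lo hi).Finite)
    {v : V} {lo : ℝ≥0} (hlo : 0 < lo) (hbound : ∀ h ∈ H, lo ≤ x (v - h)) :
    ∃ h₀ ∈ H, ∀ h ∈ H, x (v - h₀) ≤ x (v - h) := by
  by_contra! hno
  set S := {s | ∃ h ∈ H, x (v - h) = s} ∩ Set.Iic (x v)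
  -- a value that is not minimal is the value of a difference of two elements of `H`
  have hS : S ⊆ Set.range (fun h : H => x h) ∩ Set.Icc lo (x v) := by
    rintro _ ⟨⟨h, hh, rfl⟩, hle⟩
    obtain ⟨h', hh', hlt⟩ := hno h hh
    refine ⟨⟨⟨h' - h, H.sub_mem hh' hh⟩, ?_⟩, hbound h hh, hle⟩
    rw [← hx.map_sub_eq_left hlt, sub_sub_sub_cancel_left]
  obtain ⟨_, ⟨⟨h₀, hh₀, rfl⟩, hle₀⟩, hmin⟩ := Set.exists_min_image S id
    ((hdisc lo hlo (x v)).subset hS)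
    ⟨x v, ⟨0, H.zero_mem, by rw [sub_zero]⟩, Set.mem_Iic.mpr le_rfl⟩
  obtain ⟨h, hh, hlt⟩ := hno h₀ hh₀
  exact (hmin _ ⟨⟨h, hh, rfl⟩, hlt.le.trans hle₀⟩).not_gt hlt

end IsUltrametricSeminorm

end Diagonal

namespace IsUltrametricSeminorm

variable {k V : Type*} [NontriviallyNormedField k] [CompleteSpace k] [AddCommGroup V] [Module k V]
  [FiniteDimensional k V] {x : V → ℝ≥0}

theorem exists_pos_forall_le_map_sub (hx : IsUltrametricSeminorm k x)
    (hker : ∀ v, x v = 0 → v = 0) {H : Submodule k V} {v : V} (hv : v ∉ H) :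
    ∃ lo : ℝ≥0, 0 < lo ∧ ∀ h ∈ H, lo ≤ x (v - h) := by
  let : NormedAddCommGroup V := AddGroupNorm.toNormedAddCommGroup
    { toFun := fun v => x v
      map_zero' := by simp [hx.map_zero]
      add_le' := fun v w => (NNReal.coe_le_coe.mpr (hx.map_add_le_max v w)).trans
        (by simp only [NNReal.coe_max]; exact max_le_add_of_nonneg (x v).2 (x w).2)
      neg' := fun v => by simp [hx.map_neg]
      eq_zero_of_map_eq_zero' := fun v hv => hker v (NNReal.coe_eq_zero.mp hv) }
  let : NormedSpace k V := ⟨fun a v => by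
    change (x (a • v) : ℝ) ≤ ‖a‖ * x v
    rw [hx.map_smul, NNReal.coe_mul, coe_nnnorm]⟩
  have hpos := (H.closed_of_finiteDimensional.notMem_iff_infDist_pos ⟨0, H.zero_mem⟩).mp hv
  exact ⟨⟨_, Metric.infDist_nonneg⟩, hpos, fun h hh =>
    NNReal.coe_le_coe.mp ((Metric.infDist_le_dist_of_mem hh).trans_eq (dist_eq_norm v h))⟩

end IsUltrametricSeminorm

theorem exists_isDiagonalBasis_of_finrank_eq {k : Type*} [NontriviallyNormedField k]
    [CompleteSpace k] {q : ℝ} (hq : 1 < q) (hval : ∀ a : k, a ≠ 0 → ∃ m : ℤ, ‖a‖ = q ^ m)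
    (n : ℕ) {V : Type*} [AddCommGroup V] [Module k V] [FiniteDimensional k V] {x : V → ℝ≥0}
    (hx : IsUltrametricSeminorm k x) (hrank : finrank k V = n) :
    ∃ b : Basis (Fin n) k V, IsDiagonalBasis x b := by
  induction n generalizing V with
  | zero =>
    have := finrank_zero_iff.mp hrank
    exact ⟨Basis.empty V, fun c => by simp [hx.map_zero]⟩
  | succ n ih =>
    obtain ⟨v, hv0, hv⟩ : ∃ v : V, v ≠ 0 ∧ (x v = 0 ∨ ∀ w, x w = 0 → w = 0) := by
      by_cases hker : ∀ w, x w = 0 → w = 0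
      · have : Nontrivial V := (finrank_pos_iff (R := k)).mp (by omega)
        obtain ⟨v, hv⟩ := exists_ne (0 : V)
        exact ⟨v, hv, Or.inr hker⟩
      · simp only [not_forall] at hker
        obtain ⟨w, hxw, hw⟩ := hker
        exact ⟨w, hw, Or.inl hxw⟩
    obtain ⟨f, hfv⟩ := Projective.exists_dual_eq_one k hv0
    have hf : f ≠ 0 := fun h => by simp [h] at hfv
    obtain ⟨bH, hbH⟩ := ih (hx.comp_subtype (LinearMap.ker f))
      (by have := Dual.finrank_ker_add_one_of_ne_zero hf; omega)
    -- the orthogonal direction is the vector `v - h₀` closest to `v` in `ker f`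
    obtain ⟨h₀, hh₀, hmin⟩ : ∃ h₀ ∈ LinearMap.ker f, ∀ h ∈ LinearMap.ker f,
        x (v - h₀) ≤ x (v - h) := by
      rcases hv with hxv | hker
      · exact ⟨0, zero_mem _, fun h _ => by simp [hxv]⟩
      · obtain ⟨lo, hlo, hbound⟩ := hx.exists_pos_forall_le_map_sub hker (v := v)
          (H := LinearMap.ker f) (by simp [hfv])
        exact hx.exists_forall_map_sub_le
          (fun lo hlo hi => hbH.finite_range_inter_Icc hq hval hlo hi) hlo hbound
    have hfu : f (v - h₀) = 1 := by simp_all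
    have hu : ∀ h ∈ LinearMap.ker f, x (v - h₀) ≤ x (v - h₀ + h) := fun h hh => by
      rw [sub_add]
      exact hmin _ (sub_mem hh₀ hh)
    exact ⟨_, hx.isDiagonalBasis_mkFinCons hu hbH
      (fun c h hh hc => by simpa [hfu, LinearMap.mem_ker.mp hh] using congrArg f hc)
      (fun z => ⟨-f z, by simp [hfu]⟩)⟩

theorem seminorm_diagonalizable_general
    {k : Type*} [NontriviallyNormedField k] [CompleteSpace k]
    (hdisc : ∃ q : ℝ, 1 < q ∧ ∀ a : k, a ≠ 0 → ∃ m : ℤ, ‖a‖ = q ^ m)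
    {V : Type*} [AddCommGroup V] [Module k V] [FiniteDimensional k V]
    (x : V → NNReal)
    (hsmul : ∀ (a : k) (v : V), x (a • v) = ‖a‖₊ * x v)
    (hmax : ∀ v w : V, x (v + w) ≤ max (x v) (x w))
    (hx : ∃ v, x v ≠ 0) :
    ∃ (n : ℕ) (b : Module.Basis (Fin (n + 1)) k V),
      ∀ c : Fin (n + 1) → k,
        x (∑ i, c i • b i) = Finset.univ.sup (fun i => ‖c i‖₊ * x (b i)) := by
  obtain ⟨q, hq, hval⟩ := hdisc
  have hseminorm : IsUltrametricSeminorm k x := ⟨hsmul, hmax⟩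
  obtain ⟨v, hv⟩ := hx
  have : Nontrivial V := ⟨v, 0, fun h => hv (h ▸ hseminorm.map_zero)⟩
  obtain ⟨n, hn⟩ := Nat.exists_eq_add_one.mpr (finrank_pos (R := k) (M := V))
  exact ⟨n, exists_isDiagonalBasis_of_finrank_eq hq hval (n + 1) hseminorm hn⟩

/-- Bruhat–Tits / Goldman–Iwahori: over a complete field `k` with a nontrivial
discrete non-Archimedean absolute value, every non-zero seminorm `x` on a finite-dimensional
`k`-vector space `V` is diagonalizable: there is a basis `(e₀,…,e_d)` of `V` with
`x(∑ aᵢ eᵢ) = maxᵢ ‖aᵢ‖ · x(eᵢ)`. -/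
theorem seminorm_diagonalizable
    {k : Type*} [NontriviallyNormedField k] [CompleteSpace k]
    (hna : ∀ a b : k, ‖a + b‖ ≤ max ‖a‖ ‖b‖)
    (hdisc : ∃ q : ℝ, 1 < q ∧ ∀ a : k, a ≠ 0 → ∃ m : ℤ, ‖a‖ = q ^ m)
    {V : Type*} [AddCommGroup V] [Module k V] [FiniteDimensional k V]
    (x : V → NNReal)
    (hsmul : ∀ (a : k) (v : V), x (a • v) = ‖a‖₊ * x v)
    (hmax : ∀ v w : V, x (v + w) ≤ max (x v) (x w))
    (hx : ∃ v, x v ≠ 0) :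
    ∃ (n : ℕ) (b : Module.Basis (Fin (n + 1)) k V),
      ∀ c : Fin (n + 1) → k,
        x (∑ i, c i • b i) = Finset.univ.sup (fun i => ‖c i‖₊ * x (b i)) :=
  seminorm_diagonalizable_general hdisc x hsmul hmax hx
end

section
/- Let k be a non-Archimedean valued field, V a finite-dimensional k-vector space, and x a seminorm on V diagonalized by the basis (e₀, …, e_d). Define j(x) on the polynomial ring k[X₀,…,X_d] (viewed as the symmetric algebra of V with Xᵢ corresponding to eᵢ) by |Σ_ν a_ν X^ν|(j(x)) = max_ν |a_ν| ∏ᵢ |eᵢ|(x)^{νᵢ}. Then for every multiplicative seminorm z on k[X₀,…,X_d] whose restriction to the degree-one part V coincides with x, one has |f|(z) ≤ |f|(j(x)) for all f ∈ k[X₀,…,X_d]. Consequently j(x) does not depend on the choice of diagonalizing basis. -/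
/-!
A multiplicative seminorm `z` that restricts to `x` on `V` takes the value `|eᵢ|(x)` on `Xᵢ`, so
by multiplicativity `|a X^ν|(z) = |a| ∏ |eᵢ|(x)^{νᵢ}`, and the ultrametric inequality bounds
`|f|(z)` by the largest of these terms, which is `|f|(j(x))`. Conversely, `j(x)` is itself such a
seminorm. It is multiplicative because, if `μ` and `ν` are the lexicographically largest exponents
at which the maxima defining `|f|(j(x))` and `|g|(j(x))` are attained, then `a_μ b_ν` strictly
dominates every other contribution to the coefficient of `X^{μ+ν}` in `fg`. So `j(x)` is the
largest such seminorm, hence is determined by `x` alone.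
-/

open MvPolynomial

/-- A multiplicative (non-Archimedean) seminorm on the polynomial algebra `k[X₀,…,X_d]`,
extending the absolute value of `k`. -/
def IsMultSeminorm {k : Type*} [NormedField k] {d : ℕ}
    (z : MvPolynomial (Fin (d + 1)) k → NNReal) : Prop :=
  (∀ f g, z (f * g) = z f * z g) ∧
  (∀ f g, z (f + g) ≤ max (z f) (z g)) ∧
  (∀ a : k, z (C a) = ‖a‖₊)

/-- `z` restricts, on the degree-one part `V` (linear polynomials, with `Xᵢ ↔ eᵢ`), to the
seminorm diagonalized by the basis `(e₀,…,e_d)` with values `r i = |eᵢ|(x)`. -/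
def RestrictsToDiag {k : Type*} [NormedField k] {d : ℕ}
    (z : MvPolynomial (Fin (d + 1)) k → NNReal) (r : Fin (d + 1) → NNReal) : Prop :=
  ∀ c : Fin (d + 1) → k,
    z (∑ i, C (c i) * X i) = Finset.univ.sup (fun i => ‖c i‖₊ * r i)

open scoped NNReal

lemma lt_of_add_eq_add_of_lt {α : Type*} [AddCommMonoid α] [LinearOrder α]
    [IsOrderedCancelAddMonoid α] {a b c d : α} (h : a + b = c + d) (hac : a < c) : d < b := by
  by_contra! hbd
  exact (add_lt_add_of_lt_of_le hac hbd).ne h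

namespace MvPolynomial

variable {σ k : Type*} [Fintype σ] [NormedField k] (r : σ → ℝ≥0)

noncomputable def monomialWeight (ν : σ →₀ ℕ) : ℝ≥0 := ∏ i, r i ^ ν i

lemma monomialWeight_add (μ ν : σ →₀ ℕ) :
    monomialWeight r (μ + ν) = monomialWeight r μ * monomialWeight r ν := by
  simp [monomialWeight, pow_add, Finset.prod_mul_distrib]

lemma monomialWeight_zero : monomialWeight r 0 = 1 := by
  simp [monomialWeight]

lemma monomialWeight_single_one [DecidableEq σ] (i : σ) :
    monomialWeight r (Finsupp.single i 1) = r i := by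
  simp [monomialWeight, Finsupp.single_apply]

noncomputable def gaussNorm (f : MvPolynomial σ k) : ℝ≥0 :=
  f.support.sup fun ν => ‖f.coeff ν‖₊ * monomialWeight r ν

variable {r}

lemma nnnorm_coeff_mul_monomialWeight_le_gaussNorm (f : MvPolynomial σ k) (ν : σ →₀ ℕ) :
    ‖f.coeff ν‖₊ * monomialWeight r ν ≤ gaussNorm r f := by
  by_cases hν : ν ∈ f.support
  · exact Finset.le_sup (f := fun ν => ‖f.coeff ν‖₊ * monomialWeight r ν) hν
  · simp [notMem_support_iff.mp hν]

lemma nnnorm_mul_mul_monomialWeight_add (a b : k) (μ ν : σ →₀ ℕ) :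
    ‖a * b‖₊ * monomialWeight r (μ + ν) =
      (‖a‖₊ * monomialWeight r μ) * (‖b‖₊ * monomialWeight r ν) := by
  rw [monomialWeight_add, nnnorm_mul, mul_mul_mul_comm]

lemma gaussNorm_le_iff {f : MvPolynomial σ k} {c : ℝ≥0} :
    gaussNorm r f ≤ c ↔ ∀ ν, ‖f.coeff ν‖₊ * monomialWeight r ν ≤ c :=
  ⟨fun h ν => (nnnorm_coeff_mul_monomialWeight_le_gaussNorm f ν).trans h,
    fun h => Finset.sup_le fun ν _ => h ν⟩

variable (r)

lemma gaussNorm_C (a : k) : gaussNorm r (C a : MvPolynomial σ k) = ‖a‖₊ := by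
  classical
  refine le_antisymm (gaussNorm_le_iff.mpr fun ν => ?_) ?_
  · rw [coeff_C]
    split_ifs with h
    · simp [← h, monomialWeight_zero]
    · simp
  · simpa [monomialWeight_zero] using
      nnnorm_coeff_mul_monomialWeight_le_gaussNorm (r := r) (C a : MvPolynomial σ k) 0

lemma gaussNorm_linear (c : σ → k) :
    gaussNorm r (∑ i, C (c i) * X i : MvPolynomial σ k) =
      Finset.univ.sup fun i => ‖c i‖₊ * r i := by
  classical
  have hcoeff (ν : σ →₀ ℕ) : coeff ν (∑ i, C (c i) * X i : MvPolynomial σ k) =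
      ∑ i, if Finsupp.single i 1 = ν then c i else 0 := by
    simp only [coeff_sum, coeff_C_mul, coeff_X, mul_ite, mul_one, mul_zero]
  refine le_antisymm (gaussNorm_le_iff.mpr fun ν => ?_) (Finset.sup_le fun i _ => ?_)
  · by_cases h : ∃ i, Finsupp.single i 1 = ν
    · obtain ⟨i, rfl⟩ := h
      simp only [hcoeff, Finsupp.single_left_inj one_ne_zero, Finset.sum_ite_eq',
        Finset.mem_univ, if_true, monomialWeight_single_one]
      exact Finset.le_sup (f := fun i => ‖c i‖₊ * r i) (Finset.mem_univ i)
    · push Not at h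
      simp [hcoeff, h]
  · have := nnnorm_coeff_mul_monomialWeight_le_gaussNorm (r := r)
      (∑ i, C (c i) * X i : MvPolynomial σ k) (Finsupp.single i 1)
    simpa [hcoeff, Finsupp.single_left_inj one_ne_zero, monomialWeight_single_one] using this

variable {r} in
theorem le_gaussNorm {z : MvPolynomial σ k → ℝ≥0} (hmul : ∀ f g, z (f * g) = z f * z g)
    (hna : IsNonarchimedean z) (hC : ∀ a, z (C a) = ‖a‖₊) (hX : ∀ i, z (X i) = r i)
    (f : MvPolynomial σ k) : z f ≤ gaussNorm r f := by
  let zHom : MvPolynomial σ k →* ℝ≥0 := ⟨⟨z, by simpa using hC 1⟩, hmul⟩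
  have hmonomial (ν : σ →₀ ℕ) (a : k) : z (monomial ν a) = ‖a‖₊ * monomialWeight r ν := by
    rw [monomial_eq, hmul, hC]
    change _ * zHom (ν.prod fun i e => X i ^ e) = _
    rw [map_finsuppProd, Finsupp.prod_fintype _ _ fun i => by rw [pow_zero, map_one]]
    simp only [map_pow, zHom, MonoidHom.coe_mk, OneHom.coe_mk, hX, monomialWeight]
  obtain ⟨ν, -, hν⟩ := IsNonarchimedean.finset_image_add (by simpa using hC 0) (fun _ => zero_le)
    hna (fun ν => monomial ν (coeff ν f)) f.support
  calc z f = z (∑ ν ∈ f.support, monomial ν (coeff ν f)) := by rw [← f.as_sum]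
    _ ≤ z (monomial ν (coeff ν f)) := hν
    _ = ‖coeff ν f‖₊ * monomialWeight r ν := hmonomial ν _
    _ ≤ gaussNorm r f := nnnorm_coeff_mul_monomialWeight_le_gaussNorm f ν

variable {r} in
lemma exists_lex_greatest_gaussNorm_attained [LinearOrder σ] {f : MvPolynomial σ k}
    (hf : gaussNorm r f ≠ 0) :
    ∃ μ, ‖f.coeff μ‖₊ * monomialWeight r μ = gaussNorm r f ∧
      ∀ ν, toLex μ < toLex ν → ‖f.coeff ν‖₊ * monomialWeight r ν < gaussNorm r f := by
  classical
  have hs : f.support.Nonempty :=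
    Finset.nonempty_iff_ne_empty.mpr fun h => hf (by simp [gaussNorm, h])
  set A := f.support.filter fun ν => ‖f.coeff ν‖₊ * monomialWeight r ν = gaussNorm r f
  have hA : A.Nonempty := by
    obtain ⟨μ, hμ, hμ_eq⟩ := Finset.exists_mem_eq_sup f.support hs
      fun ν => ‖f.coeff ν‖₊ * monomialWeight r ν
    exact ⟨μ, Finset.mem_filter.mpr ⟨hμ, hμ_eq.symm⟩⟩
  obtain ⟨μ, hμA, hμ_max⟩ := A.exists_max_image toLex hA
  refine ⟨μ, (Finset.mem_filter.mp hμA).2, fun ν hlt =>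
    (nnnorm_coeff_mul_monomialWeight_le_gaussNorm f ν).lt_of_ne fun heq => ?_⟩
  have hν : ν ∈ f.support :=
    mem_support_iff.mpr fun h0 => hf (by rw [← heq, h0, nnnorm_zero, zero_mul])
  exact (hμ_max ν (Finset.mem_filter.mpr ⟨hν, heq⟩)).not_gt hlt

variable [IsUltrametricDist k]

lemma gaussNorm_add_le (f g : MvPolynomial σ k) :
    gaussNorm r (f + g) ≤ max (gaussNorm r f) (gaussNorm r g) := by
  refine gaussNorm_le_iff.mpr fun ν => ?_
  calc ‖coeff ν (f + g)‖₊ * monomialWeight r ν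
      ≤ max ‖coeff ν f‖₊ ‖coeff ν g‖₊ * monomialWeight r ν := by
        gcongr; exact IsUltrametricDist.nnnorm_add_le_max _ _
    _ = max (‖coeff ν f‖₊ * monomialWeight r ν) (‖coeff ν g‖₊ * monomialWeight r ν) :=
        max_mul_of_nonneg _ _ zero_le
    _ ≤ max (gaussNorm r f) (gaussNorm r g) := by
        gcongr <;> exact nnnorm_coeff_mul_monomialWeight_le_gaussNorm _ ν

lemma gaussNorm_mul_le (f g : MvPolynomial σ k) :
    gaussNorm r (f * g) ≤ gaussNorm r f * gaussNorm r g := by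
  classical
  refine gaussNorm_le_iff.mpr fun ν => ?_
  rw [coeff_mul]
  calc ‖∑ p ∈ Finset.HasAntidiagonal.antidiagonal ν, coeff p.1 f * coeff p.2 g‖₊ *
        monomialWeight r ν
      ≤ (Finset.HasAntidiagonal.antidiagonal ν).sup (fun p => ‖coeff p.1 f * coeff p.2 g‖₊) *
          monomialWeight r ν := by
        gcongr; exact Finset.nnnorm_sum_le_sup_nnnorm _ _
    _ ≤ gaussNorm r f * gaussNorm r g := by
        rw [NNReal.finset_sup_mul]
        refine Finset.sup_le fun p hp => ?_
        rw [← Finset.HasAntidiagonal.mem_antidiagonal.mp hp, nnnorm_mul_mul_monomialWeight_add]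
        gcongr <;> exact nnnorm_coeff_mul_monomialWeight_le_gaussNorm _ _

variable {r} in
lemma nnnorm_coeff_add_mul_eq_of_lex_greatest [LinearOrder σ] {f g : MvPolynomial σ k}
    {μ ν : σ →₀ ℕ} (hf : gaussNorm r f ≠ 0) (hg : gaussNorm r g ≠ 0)
    (hμ : ‖f.coeff μ‖₊ * monomialWeight r μ = gaussNorm r f)
    (hμ_lt : ∀ μ', toLex μ < toLex μ' → ‖f.coeff μ'‖₊ * monomialWeight r μ' < gaussNorm r f)
    (hν : ‖g.coeff ν‖₊ * monomialWeight r ν = gaussNorm r g)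
    (hν_lt : ∀ ν', toLex ν < toLex ν' → ‖g.coeff ν'‖₊ * monomialWeight r ν' < gaussNorm r g) :
    ‖coeff (μ + ν) (f * g)‖₊ = ‖coeff μ f * coeff ν g‖₊ := by
  classical
  rw [coeff_mul]
  refine IsNonarchimedean.apply_sum_eq_of_lt (f := fun a : k => ‖a‖₊)
    IsUltrametricDist.nnnorm_add_le_max (fun a => (nnnorm_neg a).symm)
    (l := fun p => coeff p.1 f * coeff p.2 g) (k := (μ, ν))
    (s := Finset.HasAntidiagonal.antidiagonal (μ + ν))
    (Finset.HasAntidiagonal.mem_antidiagonal.mpr rfl)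
    fun p hp hne => lt_of_mul_lt_mul_right (a := monomialWeight r (μ + ν)) ?_ zero_le
  have hsum : p.1 + p.2 = μ + ν := Finset.HasAntidiagonal.mem_antidiagonal.mp hp
  have hterm : (‖coeff p.1 f‖₊ * monomialWeight r p.1) *
      (‖coeff p.2 g‖₊ * monomialWeight r p.2) < gaussNorm r f * gaussNorm r g := by
    rcases lt_trichotomy (toLex p.1) (toLex μ) with hlt | heq | hgt
    · have hν_lt_p : toLex ν < toLex p.2 :=
        lt_of_add_eq_add_of_lt (by rw [← toLex_add, ← toLex_add, hsum]) hlt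
      exact mul_lt_mul_of_le_of_lt_of_nonneg_of_pos
        (nnnorm_coeff_mul_monomialWeight_le_gaussNorm f p.1) (hν_lt _ hν_lt_p)
        zero_le (pos_iff_ne_zero.mpr hf)
    · have h1 : p.1 = μ := toLex.injective heq
      exact absurd (Prod.ext h1 (add_left_cancel (h1 ▸ hsum))) hne
    · exact mul_lt_mul_of_lt_of_le_of_nonneg_of_pos (hμ_lt _ hgt)
        (nnnorm_coeff_mul_monomialWeight_le_gaussNorm g p.2) zero_le (pos_iff_ne_zero.mpr hg)
  calc ‖coeff p.1 f * coeff p.2 g‖₊ * monomialWeight r (μ + ν)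
      = (‖coeff p.1 f‖₊ * monomialWeight r p.1) * (‖coeff p.2 g‖₊ * monomialWeight r p.2) := by
        rw [← hsum, nnnorm_mul_mul_monomialWeight_add]
    _ < gaussNorm r f * gaussNorm r g := hterm
    _ = ‖coeff μ f * coeff ν g‖₊ * monomialWeight r (μ + ν) := by
        rw [nnnorm_mul_mul_monomialWeight_add, hμ, hν]

theorem gaussNorm_mul (f g : MvPolynomial σ k) :
    gaussNorm r (f * g) = gaussNorm r f * gaussNorm r g := by
  refine le_antisymm (gaussNorm_mul_le r f g) ?_
  rcases eq_or_ne (gaussNorm r f) 0 with hf | hf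
  · simp [hf]
  rcases eq_or_ne (gaussNorm r g) 0 with hg | hg
  · simp [hg]
  classical
  -- any linear order on the variables will do
  let _ : LinearOrder σ := linearOrderOfSTO WellOrderingRel
  obtain ⟨μ, hμ, hμ_lt⟩ := exists_lex_greatest_gaussNorm_attained hf
  obtain ⟨ν, hν, hν_lt⟩ := exists_lex_greatest_gaussNorm_attained hg
  calc gaussNorm r f * gaussNorm r g
      = ‖coeff (μ + ν) (f * g)‖₊ * monomialWeight r (μ + ν) := by
        rw [nnnorm_coeff_add_mul_eq_of_lex_greatest hf hg hμ hμ_lt hν hν_lt,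
          nnnorm_mul_mul_monomialWeight_add, hμ, hν]
    _ ≤ gaussNorm r (f * g) := nnnorm_coeff_mul_monomialWeight_le_gaussNorm _ _

end MvPolynomial

lemma RestrictsToDiag.apply_X {k : Type*} [NormedField k] {d : ℕ}
    {z : MvPolynomial (Fin (d + 1)) k → ℝ≥0} {r : Fin (d + 1) → ℝ≥0} (h : RestrictsToDiag z r)
    (i : Fin (d + 1)) : z (X i) = r i := by
  have h_single := h (Pi.single i 1)
  simp only [Pi.single_apply, apply_ite C, C_1, C_0, ite_mul, one_mul, zero_mul,
    Finset.sum_ite_eq', Finset.mem_univ, if_true] at h_single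
  rw [h_single]
  refine le_antisymm (Finset.sup_le fun j _ => ?_) ?_
  · split_ifs with hj <;> simp [hj]
  · simpa using Finset.le_sup (f := fun j => ‖if j = i then (1 : k) else 0‖₊ * r j)
      (Finset.mem_univ i)

lemma restrictsToDiag_gaussNorm {k : Type*} [NormedField k] {d : ℕ} (r : Fin (d + 1) → ℝ≥0) :
    RestrictsToDiag (gaussNorm r : MvPolynomial (Fin (d + 1)) k → ℝ≥0) r :=
  gaussNorm_linear r

lemma isMultSeminorm_gaussNorm {k : Type*} [NormedField k] [IsUltrametricDist k] {d : ℕ}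
    (r : Fin (d + 1) → ℝ≥0) :
    IsMultSeminorm (gaussNorm r : MvPolynomial (Fin (d + 1)) k → ℝ≥0) :=
  ⟨gaussNorm_mul r, gaussNorm_add_le r, gaussNorm_C r⟩

/-- the Gauss seminorm `j(x)`, defined by
`|∑ a_ν X^ν|(j(x)) = max_ν ‖a_ν‖ ∏ r_i^{ν_i}`, dominates every multiplicative seminorm `z` on
`k[X₀,…,X_d]` restricting to `x` on the degree-one part; consequently `j(x)` is independent of
the diagonalizing basis (being the unique maximal such multiplicative seminorm). -/
theorem gauss_seminorm_maximal
    {k : Type*} [NontriviallyNormedField k]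
    (hna : ∀ a b : k, ‖a + b‖ ≤ max ‖a‖ ‖b‖)
    (d : ℕ) (r : Fin (d + 1) → NNReal)
    (jx : MvPolynomial (Fin (d + 1)) k → NNReal)
    (hjx : ∀ f : MvPolynomial (Fin (d + 1)) k,
      jx f = f.support.sup (fun ν => ‖f.coeff ν‖₊ * ∏ i, r i ^ ν i)) :
    (∀ z : MvPolynomial (Fin (d + 1)) k → NNReal,
      IsMultSeminorm z → RestrictsToDiag z r → ∀ f, z f ≤ jx f) ∧
    (∀ z : MvPolynomial (Fin (d + 1)) k → NNReal,
      IsMultSeminorm z → RestrictsToDiag z r →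
      (∀ z' : MvPolynomial (Fin (d + 1)) k → NNReal,
        IsMultSeminorm z' → RestrictsToDiag z' r → ∀ f, z' f ≤ z f) →
      z = jx) := by
  have : IsUltrametricDist k :=
    IsUltrametricDist.isUltrametricDist_of_forall_norm_add_le_max_norm hna
  obtain rfl : jx = gaussNorm r := funext hjx
  have hle (z : MvPolynomial (Fin (d + 1)) k → ℝ≥0) (hz : IsMultSeminorm z)
      (hzr : RestrictsToDiag z r) (f : MvPolynomial (Fin (d + 1)) k) : z f ≤ gaussNorm r f :=
    le_gaussNorm hz.1 hz.2.1 hz.2.2 hzr.apply_X f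
  refine ⟨hle, fun z hz hzr hmax => funext fun f => le_antisymm (hle z hz hzr f) ?_⟩
  exact hmax _ (isMultSeminorm_gaussNorm r) (restrictsToDiag_gaussNorm r) f
end

section
/- Let k be a discretely valued non-Archimedean field with valuation ring k°, V = k^{d+1} with standard basis (e₀,…,e_d), and K(o) = GL(d+1, k°). Let x be a seminorm on V diagonalized by the standard basis. Extend x to each exterior power Λ^m V by |e_I|(x) = ∏_{i∈I} |e_i|(x) and |Σ_I a_I e_I|(x) = max_I |a_I|·|e_I|(x). Then for every g ∈ K(o) such that g·x is also diagonalized by the standard basis, and for every m ∈ {1,…,d+1}: max_{|I|=m} |e_I|(g·x) = max_{|I|=m} |e_I|(x). -/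
/-!
Since `g` and `g⁻¹` have entries in `k°`, `|det g| = 1`; by the ultrametric inequality some term
of the Leibniz expansion of `det g` has norm `1`, i.e. `|g (τ j) j| = 1` for a permutation `τ`.
As `y` is diagonal, `y(e_{τ j}) ≤ y(g e_j) = x(e_j)`; symmetrically `x(e_{σ i}) ≤ y(e_i)` for
some `σ`. Reindexing `m`-subsets along a permutation then bounds each maximum by the other.
-/

open Finset Matrix Equiv

section Sup

variable {ι α : Type*} [Fintype ι] [CommMonoid α] [SemilatticeSup α] [OrderBot α]
  [IsOrderedMonoid α]

lemma sup_powersetCard_prod_le_of_perm (m : ℕ) {f g : ι → α} (σ : Perm ι)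
    (h : ∀ i, f (σ i) ≤ g i) :
    (powersetCard m univ).sup (fun I => ∏ i ∈ I, f i) ≤
      (powersetCard m univ).sup (fun I => ∏ i ∈ I, g i) := by
  refine Finset.sup_le fun I hI => ?_
  have hJ : I.map σ.symm.toEmbedding ∈ powersetCard m (univ : Finset ι) := by
    simpa using hI
  calc ∏ i ∈ I, f i = ∏ j ∈ I.map σ.symm.toEmbedding, f (σ j) := by simp
    _ ≤ ∏ j ∈ I.map σ.symm.toEmbedding, g j := prod_le_prod' fun j _ => h j
    _ ≤ _ := le_sup (f := fun I => ∏ i ∈ I, g i) hJ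

end Sup

section Ultrametric

variable {k : Type*} [NormedField k] {n : Type*} [Fintype n] [DecidableEq n]

lemma nnnorm_sign_smul_prod (M : Matrix n n k) (σ : Perm n) :
    ‖Perm.sign σ • ∏ i, M (σ i) i‖₊ = ∏ i, ‖M (σ i) i‖₊ := by
  rcases Int.units_eq_one_or (Perm.sign σ) with h | h <;> simp [h, Units.smul_def]

variable [IsUltrametricDist k]

lemma nnnorm_det_le_one {M : Matrix n n k} (h : ∀ i j, ‖M i j‖₊ ≤ 1) : ‖M.det‖₊ ≤ 1 := by
  rw [det_apply]
  refine IsUltrametricDist.nnnorm_sum_le_of_forall_le fun σ _ => ?_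
  rw [nnnorm_sign_smul_prod]
  exact prod_le_one' fun i _ => h _ _

lemma exists_perm_nnnorm_eq_one_of_one_le_nnnorm_det {M : Matrix n n k}
    (h : ∀ i j, ‖M i j‖₊ ≤ 1) (hdet : 1 ≤ ‖M.det‖₊) :
    ∃ σ : Perm n, ∀ i, ‖M (σ i) i‖₊ = 1 := by
  rw [det_apply] at hdet
  obtain ⟨σ, -, hσ⟩ := IsUltrametricDist.exists_norm_finsetSum_le_of_nonempty univ_nonempty
    fun σ : Perm n => Perm.sign σ • ∏ i, M (σ i) i
  replace hσ : ‖∑ τ : Perm n, Perm.sign τ • ∏ i, M (τ i) i‖₊ ≤ ∏ i, ‖M (σ i) i‖₊ := by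
    rw [← nnnorm_sign_smul_prod]; exact_mod_cast hσ
  refine ⟨σ, fun i => le_antisymm (h _ _) ?_⟩
  calc 1 ≤ ∏ j, ‖M (σ j) j‖₊ := hdet.trans hσ
    _ = ‖M (σ i) i‖₊ * ∏ j ∈ univ.erase i, ‖M (σ j) j‖₊ := (mul_prod_erase _ _ (mem_univ i)).symm
    _ ≤ ‖M (σ i) i‖₊ := mul_le_of_le_one_right' (prod_le_one' fun j _ => h _ _)

lemma Matrix.GeneralLinearGroup.exists_perm_nnnorm_eq_one (g : GL n k)
    (hg : ∀ i j, ‖(g : Matrix n n k) i j‖ ≤ 1) (hginv : ∀ i j, ‖(↑g⁻¹ : Matrix n n k) i j‖ ≤ 1) :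
    ∃ σ : Perm n, ∀ i, ‖(g : Matrix n n k) (σ i) i‖₊ = 1 := by
  refine exists_perm_nnnorm_eq_one_of_one_le_nnnorm_det hg ?_
  have hmul : ‖(g : Matrix n n k).det‖₊ * ‖(↑g⁻¹ : Matrix n n k).det‖₊ = 1 := by
    rw [← nnnorm_mul, ← det_mul, ← Units.val_mul, mul_inv_cancel, Units.val_one, det_one,
      nnnorm_one]
  calc 1 = ‖(g : Matrix n n k).det‖₊ * ‖(↑g⁻¹ : Matrix n n k).det‖₊ := hmul.symm
    _ ≤ ‖(g : Matrix n n k).det‖₊ := mul_le_of_le_one_right' (nnnorm_det_le_one hginv)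

end Ultrametric

lemma mul_le_apply_mulVec_single {k m n : Type*} [NormedField k] [Fintype m] [Fintype n]
    [DecidableEq m] [DecidableEq n] {x : (m → k) → NNReal}
    (hdiag : ∀ c, x c = univ.sup fun i => ‖c i‖₊ * x (Pi.single i 1))
    (M : Matrix m n k) (i : m) (j : n) :
    ‖M i j‖₊ * x (Pi.single i 1) ≤ x (M *ᵥ Pi.single j 1) := by
  rw [hdiag (M *ᵥ _)]
  exact le_sup_of_le (mem_univ i) (by simp)

theorem exterior_power_sup_invariant_general
    {k : Type*} [NontriviallyNormedField k]
    (hna : ∀ a b : k, ‖a + b‖ ≤ max ‖a‖ ‖b‖)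
    (d : ℕ)
    (x : (Fin (d + 1) → k) → NNReal)
    (hdiag : ∀ c : Fin (d + 1) → k,
      x c = Finset.univ.sup (fun i => ‖c i‖₊ * x (Pi.single i 1)))
    (g : Matrix.GeneralLinearGroup (Fin (d + 1)) k)
    (hg : ∀ i j, ‖(↑g : Matrix (Fin (d + 1)) (Fin (d + 1)) k) i j‖ ≤ 1)
    (hginv : ∀ i j, ‖(↑g⁻¹ : Matrix (Fin (d + 1)) (Fin (d + 1)) k) i j‖ ≤ 1)
    (y : (Fin (d + 1) → k) → NNReal)
    (hy : ∀ v, y v = x ((↑g⁻¹ : Matrix (Fin (d + 1)) (Fin (d + 1)) k).mulVec v))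
    (hydiag : ∀ c : Fin (d + 1) → k,
      y c = Finset.univ.sup (fun i => ‖c i‖₊ * y (Pi.single i 1))) :
    ∀ m : ℕ, 1 ≤ m → m ≤ d + 1 →
      (Finset.powersetCard m (Finset.univ : Finset (Fin (d + 1)))).sup
          (fun I => ∏ i ∈ I, y (Pi.single i 1)) =
        (Finset.powersetCard m (Finset.univ : Finset (Fin (d + 1)))).sup
          (fun I => ∏ i ∈ I, x (Pi.single i 1)) := by
  intro m _ _
  have := IsUltrametricDist.isUltrametricDist_of_forall_norm_add_le_max_norm hna
  obtain ⟨σ, hσ⟩ := (g⁻¹).exists_perm_nnnorm_eq_one hginv (by simpa using hg)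
  obtain ⟨τ, hτ⟩ := g.exists_perm_nnnorm_eq_one hg hginv
  apply le_antisymm
  · refine sup_powersetCard_prod_le_of_perm m τ fun j => ?_
    calc y (Pi.single (τ j) 1) = ‖(g : Matrix _ _ k) (τ j) j‖₊ * y (Pi.single (τ j) 1) := by
          rw [hτ, one_mul]
      _ ≤ y ((g : Matrix _ _ k) *ᵥ Pi.single j 1) := mul_le_apply_mulVec_single hydiag _ _ _
      _ = x (Pi.single j 1) := by
          rw [hy, mulVec_mulVec, ← Units.val_mul, inv_mul_cancel, Units.val_one, one_mulVec]
  · refine sup_powersetCard_prod_le_of_perm m σ fun i => ?_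
    calc x (Pi.single (σ i) 1) = ‖(↑g⁻¹ : Matrix _ _ k) (σ i) i‖₊ * x (Pi.single (σ i) 1) := by
          rw [hσ, one_mul]
      _ ≤ x ((↑g⁻¹ : Matrix _ _ k) *ᵥ Pi.single i 1) := mul_le_apply_mulVec_single hdiag _ _ _
      _ = y (Pi.single i 1) := (hy _).symm

/-- let `x` be a seminorm on `V = k^{d+1}` diagonalized by the standard basis and
`g ∈ K(o) = GL(d+1, k°)` such that `g·x` is also diagonalized by the standard basis. Extending
seminorms to the exterior powers by `|e_I| = ∏_{i∈I} |e_i|`, for every `m ∈ {1,…,d+1}` one has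
`max_{|I|=m} |e_I|(g·x) = max_{|I|=m} |e_I|(x)`. -/
theorem exterior_power_sup_invariant
    {k : Type*} [NontriviallyNormedField k]
    (hna : ∀ a b : k, ‖a + b‖ ≤ max ‖a‖ ‖b‖)
    (hdisc : ∃ q : ℝ, 1 < q ∧ ∀ a : k, a ≠ 0 → ∃ m : ℤ, ‖a‖ = q ^ m)
    (d : ℕ)
    (x : (Fin (d + 1) → k) → NNReal)
    (hsmul : ∀ (a : k) (v : Fin (d + 1) → k), x (a • v) = ‖a‖₊ * x v)
    (hmax : ∀ v w : Fin (d + 1) → k, x (v + w) ≤ max (x v) (x w))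
    (hdiag : ∀ c : Fin (d + 1) → k,
      x c = Finset.univ.sup (fun i => ‖c i‖₊ * x (Pi.single i 1)))
    (g : Matrix.GeneralLinearGroup (Fin (d + 1)) k)
    (hg : ∀ i j, ‖(↑g : Matrix (Fin (d + 1)) (Fin (d + 1)) k) i j‖ ≤ 1)
    (hginv : ∀ i j, ‖(↑g⁻¹ : Matrix (Fin (d + 1)) (Fin (d + 1)) k) i j‖ ≤ 1)
    (y : (Fin (d + 1) → k) → NNReal)
    (hy : ∀ v, y v = x ((↑g⁻¹ : Matrix (Fin (d + 1)) (Fin (d + 1)) k).mulVec v))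
    (hydiag : ∀ c : Fin (d + 1) → k,
      y c = Finset.univ.sup (fun i => ‖c i‖₊ * y (Pi.single i 1))) :
    ∀ m : ℕ, 1 ≤ m → m ≤ d + 1 →
      (Finset.powersetCard m (Finset.univ : Finset (Fin (d + 1)))).sup
          (fun I => ∏ i ∈ I, y (Pi.single i 1)) =
        (Finset.powersetCard m (Finset.univ : Finset (Fin (d + 1)))).sup
          (fun I => ∏ i ∈ I, x (Pi.single i 1)) :=
  exterior_power_sup_invariant_general hna d x hdiag g hg hginv y hy hydiag
end

section
/- Let Φ be a root system with basis Δ and highest dominant weight λ₀ of a finite W-stable set of weights Λ_wt (all of the form λ₀ − Σ_{α∈Δ} n_α α with n_α ∈ ℤ≥0). Let Z = {α ∈ Δ : (λ₀|α) = 0} and let C_∅ be the cone {u : ⟨λ₀ − λ, u⟩ ≥ 0 for all λ ∈ Λ_wt} in the dual space. Then C_∅ equals the union of the closed Weyl chambers 𝔠(Δ') = {u : ⟨α,u⟩ ≥ 0 for all α ∈ Δ'} over all bases Δ' = w(Δ) (w ∈ W) such that w(λ₀) = λ₀; equivalently, over all w in the subgroup of W generated by the reflections r_α, α ∈ Z.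 -/
/-!
If `w` fixes `λ₀` and stabilises `Λwt`, then `λ₀ - λ = w (λ₀ - w⁻¹ λ)` is a non-negative
combination of `w(Δ)`, so the chamber of `w(Δ)` lies in the cone `C_∅`.

Conversely let `u ∈ C_∅` and `Z = {α ∈ Δ : (λ₀|α) = 0}`. The reflections in `Z` fix `λ₀`, so
for `α ∈ Δ \ Z` and `w` in the group they generate, applying `w` to `λ₀ - λ = m α` gives
`0 ≤ u (w α)`. So it suffices to move the vector representing `u` on `span Z` into the chamber
of `Z` by that group. It need not be finite, so we argue by compactness: the orbit
closure of a vector is compact, a maximiser `x` of `⟪p, ·⟫` on it (`p` strictly positive on `Z`)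
lies in the closed chamber, and an orbit point close to `x` is moved into the chamber by the
reflection group of the face `{α : ⟪x, α⟫ = 0}` of `x`, which is handled by induction.
-/

open scoped RealInnerProductSpace

section
variable {E : Type*} [NormedAddCommGroup E] [InnerProductSpace ℝ E]

def IsReflection (ρ : E ≃ₗ[ℝ] E) (α : E) : Prop :=
  ∀ v, ρ v = v - (2 * ⟪v, α⟫ / ⟪α, α⟫) • α

variable (E) in
def innerPreservingSubgroup : Subgroup (E ≃ₗ[ℝ] E) where
  carrier := {g | ∀ u v, ⟪g u, g v⟫ = ⟪u, v⟫}
  mul_mem' {g h} hg hh u v := (hg _ _).trans (hh u v)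
  one_mem' _ _ := rfl
  inv_mem' {g} hg u v := by
    rw [← hg]
    exact congrArg₂ _ (g.apply_symm_apply u) (g.apply_symm_apply v)

def displacementSubgroup (V : Submodule ℝ E) : Subgroup (E ≃ₗ[ℝ] E) where
  carrier := {g | ∀ x, g x - x ∈ V}
  mul_mem' {g h} hg hh x := by
    simpa using V.add_mem (hg (h x)) (hh x)
  one_mem' x := by simp
  inv_mem' {g} hg x := by
    simpa using V.neg_mem (hg (g.symm x))

namespace IsReflection

variable {ρ : E ≃ₗ[ℝ] E} {α : E}

theorem inner_map_map (h : IsReflection ρ α) (u v : E) : ⟪ρ u, ρ v⟫ = ⟪u, v⟫ := by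
  rcases eq_or_ne α 0 with rfl | hα
  · simp [h _]
  · have : ⟪α, α⟫ ≠ 0 := inner_self_ne_zero.2 hα
    simp only [h _, inner_sub_left, inner_sub_right, real_inner_smul_left,
      real_inner_smul_right, real_inner_comm α]
    field_simp
    ring

theorem apply_sub_self_mem_span (h : IsReflection ρ α) (v : E) : ρ v - v ∈ ℝ ∙ α := by
  rw [h, sub_sub_cancel_left]
  exact Submodule.neg_mem _ (Submodule.smul_mem _ _ (Submodule.mem_span_singleton_self α))

theorem apply_eq_self (h : IsReflection ρ α) {v : E} (hv : ⟪v, α⟫ = 0) : ρ v = v := by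
  simp [h v, hv]

end IsReflection

section ReflectionGroup

variable {r : E → E ≃ₗ[ℝ] E} {s : Set E}

theorem closure_reflections_le_innerPreservingSubgroup (hr : ∀ α ∈ s, IsReflection (r α) α) :
    Subgroup.closure (r '' s) ≤ innerPreservingSubgroup E :=
  (Subgroup.closure_le _).2 <| Set.image_subset_iff.2 fun α hα => (hr α hα).inner_map_map

theorem closure_reflections_le_displacementSubgroup (hr : ∀ α ∈ s, IsReflection (r α) α) :
    Subgroup.closure (r '' s) ≤ displacementSubgroup (Submodule.span ℝ s) :=
  (Subgroup.closure_le _).2 <| Set.image_subset_iff.2 fun α hα v =>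
    Submodule.span_mono (Set.singleton_subset_iff.2 hα) ((hr α hα).apply_sub_self_mem_span v)

theorem closure_reflections_le_stabilizer (hr : ∀ α ∈ s, IsReflection (r α) α) {x : E}
    (hx : ∀ α ∈ s, ⟪x, α⟫ = 0) :
    Subgroup.closure (r '' s) ≤ MulAction.stabilizer (E ≃ₗ[ℝ] E) x :=
  (Subgroup.closure_le _).2 <| Set.image_subset_iff.2 fun α hα =>
    (hr α hα).apply_eq_self (hx α hα)

end ReflectionGroup

section Orbit

variable {g : E ≃ₗ[ℝ] E}

theorem norm_apply_of_mem_innerPreservingSubgroup (hg : g ∈ innerPreservingSubgroup E) (v : E) :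
    ‖g v‖ = ‖v‖ :=
  (g.isometryOfInner hg).norm_map v

theorem continuous_of_mem_innerPreservingSubgroup (hg : g ∈ innerPreservingSubgroup E) :
    Continuous g :=
  (g.isometryOfInner hg).continuous

theorem dist_apply_eq_of_apply_eq_self (hg : g ∈ innerPreservingSubgroup E) {x : E}
    (hgx : g x = x) (z : E) : dist (g z) x = dist z x := by
  conv_lhs => rw [← hgx]
  exact (g.isometryOfInner hg).dist_map z x

variable {G : Subgroup (E ≃ₗ[ℝ] E)} (hGi : G ≤ innerPreservingSubgroup E)
include hGi

theorem isCompact_closure_orbit {V : Submodule ℝ E} [FiniteDimensional ℝ V]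
    (hGV : G ≤ displacementSubgroup V) (y : E) : IsCompact (closure (MulAction.orbit G y)) := by
  refine ((isCompact_closedBall (0 : V) (2 * ‖y‖)).image
    (f := fun v : V => y + v) (by fun_prop)).closure_of_subset ?_
  rintro _ ⟨⟨g, hg⟩, rfl⟩
  refine ⟨⟨g y - y, hGV hg y⟩, ?_, by simp [Subgroup.smul_def, LinearEquiv.smul_def]⟩
  rw [mem_closedBall_zero_iff]
  calc ‖g y - y‖ ≤ ‖g y‖ + ‖y‖ := norm_sub_le _ _
    _ = 2 * ‖y‖ := by rw [norm_apply_of_mem_innerPreservingSubgroup (hGi hg)]; ring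

theorem apply_mem_closure_orbit (hg : g ∈ G) {x y : E}
    (hx : x ∈ closure (MulAction.orbit G y)) : g x ∈ closure (MulAction.orbit G y) :=
  map_mem_closure (continuous_of_mem_innerPreservingSubgroup (hGi hg)) hx
    fun _ hz => MulAction.mem_orbit_of_mem_orbit (⟨g, hg⟩ : G) hz

theorem eq_of_mem_closure_orbit_of_le_stabilizer {x y : E}
    (hGx : G ≤ MulAction.stabilizer (E ≃ₗ[ℝ] E) x) (hx : x ∈ closure (MulAction.orbit G y)) :
    y = x := by
  refine dist_le_zero.1 (le_of_forall_gt fun ε hε => ?_)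
  obtain ⟨_, ⟨⟨g, hg⟩, rfl⟩, hgy⟩ := Metric.mem_closure_iff.1 hx ε hε
  change dist x (g y) < ε at hgy
  rwa [dist_comm, dist_apply_eq_of_apply_eq_self (hGi hg) (hGx hg)] at hgy

end Orbit

section Chamber

variable {r : E → E ≃ₗ[ℝ] E} {p : E}

theorem exists_mem_inner_nonneg_of_isCompact {s : Set E} {X : Set E}
    (hr : ∀ α ∈ s, IsReflection (r α) α) (hp : ∀ α ∈ s, 0 < ⟪p, α⟫)
    (hX : IsCompact X) (hne : X.Nonempty) (hXr : ∀ α ∈ s, ∀ x ∈ X, r α x ∈ X) :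
    ∃ x ∈ X, ∀ α ∈ s, 0 ≤ ⟪x, α⟫ := by
  obtain ⟨x, hx, hmax⟩ :=
    hX.exists_isMaxOn hne
      (continuous_const.inner continuous_id : Continuous (⟪p, ·⟫)).continuousOn
  -- if `⟪x, α⟫ < 0`, reflecting in `α` would strictly increase `⟪p, ·⟫`
  refine ⟨x, hx, fun α hα => not_lt.1 fun hneg => ?_⟩
  have hαα : 0 < ⟪α, α⟫ := real_inner_self_pos.2 fun h => (hp α hα).ne' (by simp [h])
  have hle : ⟪p, r α x⟫ ≤ ⟪p, x⟫ := hmax (hXr α hα x hx)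
  rw [hr α hα, inner_sub_right, real_inner_smul_right] at hle
  have := mul_neg_of_neg_of_pos
    (div_neg_of_neg_of_pos (by linarith : 2 * ⟪x, α⟫ < 0) hαα) (hp α hα)
  linarith

theorem exists_mem_closure_reflections_inner_nonneg (s : Finset E)
    (hr : ∀ α ∈ s, IsReflection (r α) α) (hp : ∀ α ∈ s, 0 < ⟪p, α⟫) (y : E) :
    ∃ g ∈ Subgroup.closure (r '' s), ∀ α ∈ s, 0 ≤ ⟪g y, α⟫ := by
  induction s using Finset.strongInduction generalizing y with
  | H s ih =>
  have hGi := closure_reflections_le_innerPreservingSubgroup hr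
  obtain ⟨x, hxy, hx⟩ := exists_mem_inner_nonneg_of_isCompact hr hp
    (isCompact_closure_orbit hGi (closure_reflections_le_displacementSubgroup hr) y)
    ⟨y, subset_closure (MulAction.mem_orbit_self y)⟩
    fun α hα _ hz => apply_mem_closure_orbit hGi (Subgroup.subset_closure ⟨α, hα, rfl⟩) hz
  set J := s.filter (⟪x, ·⟫ = 0)
  have hJx : ∀ α ∈ J, ⟪x, α⟫ = 0 := fun α hα => (Finset.mem_filter.1 hα).2
  obtain hJs | hJs := (s.filter_subset _ : J ⊆ s).eq_or_ssubset
  · have hGx := closure_reflections_le_stabilizer hr (Finset.filter_eq_self.1 hJs)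
    refine ⟨1, one_mem _, fun α hα => ?_⟩
    rw [eq_of_mem_closure_orbit_of_le_stabilizer hGi hGx hxy]
    exact hx α hα
  -- The reflection group of `J` fixes `x` and preserves distances, so it moves an orbit point
  -- near `x` into the chamber of `J` while keeping the inner products with `s \ J` positive.
  obtain ⟨ε, hε, hball⟩ :
      ∃ ε > 0, ∀ ⦃z⦄, dist z x < ε → ∀ α ∈ s, ⟪x, α⟫ ≠ 0 → 0 < ⟪z, α⟫ := by
    refine Metric.eventually_nhds_iff.1 ((Filter.eventually_all_finset s).2 fun α hα => ?_)
    by_cases h : ⟪x, α⟫ = 0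
    · simp [h]
    exact (((continuous_id.inner continuous_const).tendsto x).eventually_const_lt
      ((hx α hα).lt_of_ne' h)).mono fun _ hz _ => hz
  obtain ⟨_, ⟨⟨g, hg⟩, rfl⟩, hgy⟩ := Metric.mem_closure_iff.1 hxy ε hε
  have hrJ : ∀ α ∈ J, IsReflection (r α) α := fun α hα => hr α (Finset.mem_filter.1 hα).1
  obtain ⟨g', hg', hg'J⟩ :=
    ih J hJs hrJ (fun α hα => hp α (Finset.mem_filter.1 hα).1) (g y)
  have hJG : Subgroup.closure (r '' J) ≤ Subgroup.closure (r '' s) :=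
    Subgroup.closure_mono (Set.image_mono (Finset.coe_subset.2 hJs.subset))
  refine ⟨g' * g, mul_mem (hJG hg') hg, fun α hα => ?_⟩
  by_cases hxα : ⟪x, α⟫ = 0
  · exact hg'J α (Finset.mem_filter.2 ⟨hα, hxα⟩)
  refine (hball ?_ α hα hxα).le
  have hg'x : g' x = x := closure_reflections_le_stabilizer hrJ hJx hg'
  rw [LinearEquiv.mul_apply, dist_apply_eq_of_apply_eq_self (hGi (hJG hg')) hg'x, dist_comm]
  exact hgy

end Chamber

theorem Submodule.exists_inner_eq (V : Submodule ℝ E) [FiniteDimensional ℝ V]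
    (f : V →ₗ[ℝ] ℝ) : ∃ y : E, ∀ v : V, ⟪y, v⟫ = f v :=
  ⟨(InnerProductSpace.toDual ℝ V).symm (LinearMap.toContinuousLinearMap f),
    fun v => by rw [← Submodule.coe_inner]; exact InnerProductSpace.toDual_symm_apply⟩

theorem exists_inner_pos_of_linearIndepOn {s : Finset E} (hs : LinearIndepOn ℝ id (s : Set E)) :
    ∃ p : E, ∀ α ∈ s, 0 < ⟪p, α⟫ := by
  have := FiniteDimensional.span_of_finite ℝ (Set.finite_range fun α : (s : Set E) => id α.1)
  obtain ⟨p, hp⟩ := Submodule.exists_inner_eq _ (Module.Basis.span hs).sumCoords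
  refine ⟨p, fun α hα => ?_⟩
  have := hp (Module.Basis.span hs ⟨α, hα⟩)
  rw [Module.Basis.sumCoords_self_apply, Module.Basis.coe_span_apply hs] at this
  exact this ▸ one_pos

section Weights

variable {Δ Λwt : Finset E} {lam0 : E} {u : E →ₗ[ℝ] ℝ}

theorem apply_sub_nonneg_of_apply_fixed_nonneg
    (hhigh : ∀ lam ∈ Λwt, ∃ c : E → ℕ, lam0 - lam = ∑ α ∈ Δ, (c α : ℝ) • α)
    {w : E ≃ₗ[ℝ] E} (hΛ : ∀ lam ∈ Λwt, w⁻¹ lam ∈ Λwt) (hw : w lam0 = lam0)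
    (hwu : ∀ α ∈ Δ, 0 ≤ u (w α)) {lam : E} (hlam : lam ∈ Λwt) : 0 ≤ u (lam0 - lam) := by
  obtain ⟨c, hc⟩ := hhigh _ (hΛ lam hlam)
  have : lam0 - lam = w (∑ α ∈ Δ, (c α : ℝ) • α) := by
    rw [← hc, map_sub, hw]
    exact congrArg _ (w.apply_symm_apply lam).symm
  rw [this, map_sum, map_sum]
  exact Finset.sum_nonneg fun α hα => by
    rw [map_smul, map_smul, smul_eq_mul]
    exact mul_nonneg (c α).cast_nonneg (hwu α hα)

theorem exists_mem_closure_reflections_apply_nonneg {r : E → E ≃ₗ[ℝ] E}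
    (hr : ∀ α ∈ Δ, IsReflection (r α) α) (hind : LinearIndepOn ℝ id (Δ : Set E))
    (hΛ : ∀ w ∈ Subgroup.closure (r '' ↑(Δ.filter (⟪lam0, ·⟫ = 0))), ∀ lam ∈ Λwt, w lam ∈ Λwt)
    (hsupp : ∀ α ∈ Δ, ⟪lam0, α⟫ ≠ 0 →
      ∃ lam ∈ Λwt, ∃ m : ℕ, 0 < m ∧ lam0 - lam = (m : ℝ) • α)
    (hu : ∀ lam ∈ Λwt, 0 ≤ u (lam0 - lam)) :
    ∃ w ∈ Subgroup.closure (r '' ↑(Δ.filter (⟪lam0, ·⟫ = 0))), ∀ α ∈ Δ, 0 ≤ u (w α) := by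
  set Z := Δ.filter (⟪lam0, ·⟫ = 0)
  have hZ : ∀ α ∈ Z, ⟪lam0, α⟫ = 0 := fun α hα => (Finset.mem_filter.1 hα).2
  have hrZ : ∀ α ∈ Z, IsReflection (r α) α := fun α hα => hr α (Finset.mem_filter.1 hα).1
  obtain ⟨p, hp⟩ := exists_inner_pos_of_linearIndepOn (s := Z) (hind.mono (Δ.filter_subset _))
  obtain ⟨y, hy⟩ := (Submodule.span ℝ (Z : Set E)).exists_inner_eq (u ∘ₗ Submodule.subtype _)
  obtain ⟨g, hg, hgy⟩ := exists_mem_closure_reflections_inner_nonneg Z hrZ hp y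
  refine ⟨g⁻¹, inv_mem hg, fun α hα => ?_⟩
  by_cases hα0 : ⟪lam0, α⟫ = 0
  · have hαZ : α ∈ Z := Finset.mem_filter.2 ⟨hα, hα0⟩
    have hmem : g⁻¹ α ∈ Submodule.span ℝ (Z : Set E) := by
      simpa using add_mem (closure_reflections_le_displacementSubgroup hrZ (inv_mem hg) α)
        (Submodule.subset_span hαZ)
    calc 0 ≤ ⟪g y, α⟫ := hgy α hαZ
      _ = ⟪g y, g (g⁻¹ α)⟫ := by rw [show g (g⁻¹ α) = α from g.apply_symm_apply α]
      _ = ⟪y, g⁻¹ α⟫ := closure_reflections_le_innerPreservingSubgroup hrZ hg _ _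
      _ = u (g⁻¹ α) := hy ⟨_, hmem⟩
  · obtain ⟨lam, hlam, m, hm, heq⟩ := hsupp α hα hα0
    have hfix : g⁻¹ lam0 = lam0 := closure_reflections_le_stabilizer hrZ hZ (inv_mem hg)
    have := hu _ (hΛ _ (inv_mem hg) lam hlam)
    rw [← hfix, ← map_sub, heq, map_smul, map_smul, smul_eq_mul] at this
    exact nonneg_of_mul_nonneg_right this (by exact_mod_cast hm)

end Weights

end

theorem cone_eq_union_of_chambers_fixing_highest_weight_general
    {E : Type*} [NormedAddCommGroup E] [InnerProductSpace ℝ E]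
    (Δ : Finset E)
    (hind : LinearIndependent ℝ (fun α : ↥Δ => (α : E)))
    (W : Subgroup (E ≃ₗ[ℝ] E))
    (Λwt : Finset E)
    (hstab : ∀ w ∈ W, ∀ lam ∈ Λwt, w lam ∈ Λwt)
    (lam0 : E)
    (hhigh : ∀ lam ∈ Λwt, ∃ c : E → ℕ, lam0 - lam = ∑ α ∈ Δ, (c α : ℝ) • α)
    (hsupp : ∀ α ∈ Δ, ⟪lam0, α⟫ ≠ 0 →
      ∃ lam ∈ Λwt, ∃ m : ℕ, 0 < m ∧ lam0 - lam = (m : ℝ) • α)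
    (r : E → (E ≃ₗ[ℝ] E))
    (hrfor : ∀ α v, r α v = v - (2 * ⟪v, α⟫ / ⟪α, α⟫) • α)
    (hrW : ∀ α ∈ Δ, r α ∈ W) :
    ∀ u : E →ₗ[ℝ] ℝ,
      ((∀ lam ∈ Λwt, 0 ≤ u (lam0 - lam)) ↔
        (∃ w ∈ W, w lam0 = lam0 ∧ ∀ α ∈ Δ, 0 ≤ u (w α))) ∧
      ((∀ lam ∈ Λwt, 0 ≤ u (lam0 - lam)) ↔
        (∃ w ∈ Subgroup.closure {g : E ≃ₗ[ℝ] E | ∃ α ∈ Δ, ⟪lam0, α⟫ = 0 ∧ g = r α},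
          ∀ α ∈ Δ, 0 ≤ u (w α))) := by
  intro u
  have hr : ∀ α, IsReflection (r α) α := hrfor
  set Z := Δ.filter (⟪lam0, ·⟫ = 0)
  have hgen : {g : E ≃ₗ[ℝ] E | ∃ α ∈ Δ, ⟪lam0, α⟫ = 0 ∧ g = r α} = r '' Z := by
    ext; simp [Z, eq_comm, and_assoc]
  have hGW : Subgroup.closure (r '' Z) ≤ W :=
    (Subgroup.closure_le _).2 <| Set.image_subset_iff.2 fun α hα =>
      hrW α (Finset.mem_filter.1 hα).1
  have hGfix : Subgroup.closure (r '' Z) ≤ MulAction.stabilizer _ lam0 :=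
    closure_reflections_le_stabilizer (fun α _ => hr α) fun α hα => (Finset.mem_filter.1 hα).2
  have hcone : ∀ w ∈ W, w lam0 = lam0 → (∀ α ∈ Δ, 0 ≤ u (w α)) →
      ∀ lam ∈ Λwt, 0 ≤ u (lam0 - lam) := fun w hw hfix hwu _ =>
    apply_sub_nonneg_of_apply_fixed_nonneg hhigh (hstab _ (inv_mem hw)) hfix hwu
  have hchamber := exists_mem_closure_reflections_apply_nonneg (fun α _ => hr α) hind
    (fun w hw => hstab w (hGW hw)) hsupp (u := u)
  rw [hgen]
  exact ⟨⟨fun hu => let ⟨w, hw, hwu⟩ := hchamber hu; ⟨w, hGW hw, hGfix hw, hwu⟩,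
      fun ⟨w, hw, hfix, hwu⟩ => hcone w hw hfix hwu⟩,
    ⟨hchamber, fun ⟨w, hw, hwu⟩ => hcone w (hGW hw) (hGfix hw) hwu⟩⟩

/-- let `Λwt` be a finite `W`-stable set of weights with highest weight `λ₀`
(every `λ ∈ Λwt` is `λ₀` minus a non-negative integral combination of the simple roots `Δ`), and
`Z = {α ∈ Δ : (λ₀|α) = 0}`. Then the cone `C_∅ = {u : ⟨λ₀ - λ, u⟩ ≥ 0 ∀ λ ∈ Λwt}` in the dual
space equals the union of the closed Weyl chambers `𝔠(w(Δ))` over all `w ∈ W` with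
`w(λ₀) = λ₀`; equivalently, over all `w` in the subgroup generated by the reflections `r_α`,
`α ∈ Z`. -/
theorem cone_eq_union_of_chambers_fixing_highest_weight
    {E : Type*} [NormedAddCommGroup E] [InnerProductSpace ℝ E]
    (Δ : Finset E)
    (hind : LinearIndependent ℝ (fun α : ↥Δ => (α : E)))
    (W : Subgroup (E ≃ₗ[ℝ] E))
    (hWinner : ∀ w ∈ W, ∀ u v : E, ⟪w u, w v⟫ = ⟪u, v⟫)
    (Λwt : Finset E)
    (hstab : ∀ w ∈ W, ∀ lam ∈ Λwt, w lam ∈ Λwt)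
    (lam0 : E) (hlam0 : lam0 ∈ Λwt)
    (hdom : ∀ α ∈ Δ, 0 ≤ ⟪lam0, α⟫)
    (hhigh : ∀ lam ∈ Λwt, ∃ c : E → ℕ, lam0 - lam = ∑ α ∈ Δ, (c α : ℝ) • α)
    (hsupp : ∀ α ∈ Δ, ⟪lam0, α⟫ ≠ 0 →
      ∃ lam ∈ Λwt, ∃ m : ℕ, 0 < m ∧ lam0 - lam = (m : ℝ) • α)
    (r : E → (E ≃ₗ[ℝ] E))
    (hrfor : ∀ α v, r α v = v - (2 * ⟪v, α⟫ / ⟪α, α⟫) • α)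
    (hrW : ∀ α ∈ Δ, r α ∈ W) :
    ∀ u : E →ₗ[ℝ] ℝ,
      ((∀ lam ∈ Λwt, 0 ≤ u (lam0 - lam)) ↔
        (∃ w ∈ W, w lam0 = lam0 ∧ ∀ α ∈ Δ, 0 ≤ u (w α))) ∧
      ((∀ lam ∈ Λwt, 0 ≤ u (lam0 - lam)) ↔
        (∃ w ∈ Subgroup.closure {g : E ≃ₗ[ℝ] E | ∃ α ∈ Δ, ⟪lam0, α⟫ = 0 ∧ g = r α},
          ∀ α ∈ Δ, 0 ≤ u (w α))) :=
  cone_eq_union_of_chambers_fixing_highest_weight_general Δ hind W Λwt hstab lam0 hhigh hsupp r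
    hrfor hrW
end
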